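/- Let Θ = (α, β, γ) be an autotopism of a Latin square L of order n and let p be a prime such that both α and β have at least one cycle of length p. If γ has no cycle of length p, then the number of fixed points of γ is at least p times the maximum of the number of p-cycles of α and the number of p-cycles of β. -/

import Mathlib

open Classical

/-- Number of cycles of length `r` in the disjoint cycle decomposition of `δ`
(fixed points count as cycles of length 1). -/
noncomputable def cyclesOfLen {n : ℕ} (δ : Equiv.Perm (Fin n)) (r : ℕ) : ℕ :=
  (Finset.univ.filter fun x : Fin n => Function.minimalPeriod (⇑δ) x = r).card / r

/-- `L` is (the table of) a Latin square of order `n`. -/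
def IsLatinSquare {n : ℕ} (L : Fin n → Fin n → Fin n) : Prop :=
  (∀ i, Function.Bijective (L i)) ∧ ∀ j, Function.Bijective fun i => L i j

/-- `(α, β, γ)` is an autotopism of `L`: `(i,j,k) ∈ L → (α i, β j, γ k) ∈ L`. -/
def IsAutotopism {n : ℕ} (L : Fin n → Fin n → Fin n)
    (α β γ : Equiv.Perm (Fin n)) : Prop :=
  ∀ i j, L (α i) (β j) = γ (L i j)

/-
A point `i` in a `p`-cycle of `α` and a point `j` in a `p`-cycle of `β` give `Θ^p (i, j, L i j) =
(i, j, γ^p (L i j)) ∈ L`, so `γ^p` fixes `L i j`; its `γ`-period divides the prime `p` and is not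
`p`, so `γ` fixes `L i j`. Fixing `j` and letting `i` run over the at least `p * cyclesOfLen α p`
points in `p`-cycles of `α` yields that many distinct fixed points of `γ`, since column `j` of `L`
is injective. The bound for `β` is the same argument applied to the transposed square.
-/

open Function Finset

theorem minimalPeriod_le_card_filter_minimalPeriod_eq {α : Type*} [Fintype α] (f : α → α) (x : α) :
    minimalPeriod f x ≤ #{y | minimalPeriod f y = minimalPeriod f x} := by
  rcases (minimalPeriod f x).eq_zero_or_pos with h | h
  · simp [h]
  have hx : x ∈ periodicPts f := minimalPeriod_pos_iff_mem_periodicPts.mp h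
  have hinj : Set.InjOn (f^[·] x) ↑(range (minimalPeriod f x)) := by
    rw [coe_range]
    exact iterate_injOn_Iio_minimalPeriod
  simpa using card_le_card_of_injOn (f^[·] x)
    (fun t _ => by simpa using minimalPeriod_apply_iterate hx t) hinj

section Cycles

variable {n : ℕ}

noncomputable def pointsOfMinimalPeriod (δ : Equiv.Perm (Fin n)) (r : ℕ) : Finset (Fin n) :=
  {x | minimalPeriod δ x = r}

theorem mem_pointsOfMinimalPeriod {δ : Equiv.Perm (Fin n)} {r : ℕ} {x : Fin n} :
    x ∈ pointsOfMinimalPeriod δ r ↔ minimalPeriod δ x = r := by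
  simp [pointsOfMinimalPeriod]

theorem cyclesOfLen_eq_card_div (δ : Equiv.Perm (Fin n)) (r : ℕ) :
    cyclesOfLen δ r = #(pointsOfMinimalPeriod δ r) / r :=
  rfl

theorem cyclesOfLen_one (δ : Equiv.Perm (Fin n)) :
    cyclesOfLen δ 1 = #(pointsOfMinimalPeriod δ 1) :=
  Nat.div_one _

theorem mul_cyclesOfLen_le (δ : Equiv.Perm (Fin n)) (r : ℕ) :
    r * cyclesOfLen δ r ≤ #(pointsOfMinimalPeriod δ r) := by
  rw [cyclesOfLen_eq_card_div, mul_comm]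
  exact Nat.div_mul_le_self _ _

theorem exists_minimalPeriod_eq_of_cyclesOfLen_pos {δ : Equiv.Perm (Fin n)} {r : ℕ}
    (h : 0 < cyclesOfLen δ r) : ∃ x, minimalPeriod δ x = r := by
  have hcard : 0 < #(pointsOfMinimalPeriod δ r) :=
    Nat.pos_of_ne_zero fun h0 => by simp [cyclesOfLen_eq_card_div, h0] at h
  obtain ⟨x, hx⟩ := card_pos.mp hcard
  exact ⟨x, mem_pointsOfMinimalPeriod.mp hx⟩

theorem cyclesOfLen_pos_of_minimalPeriod_eq {δ : Equiv.Perm (Fin n)} {r : ℕ} {x : Fin n}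
    (hr : 0 < r) (hx : minimalPeriod δ x = r) : 0 < cyclesOfLen δ r := by
  have := minimalPeriod_le_card_filter_minimalPeriod_eq δ x
  rw [hx] at this
  exact Nat.div_pos this hr

theorem minimalPeriod_eq_one_of_isPeriodicPt {γ : Equiv.Perm (Fin n)} {p : ℕ} (hp : p.Prime)
    (hγ : cyclesOfLen γ p = 0) {k : Fin n} (hk : IsPeriodicPt γ p k) :
    minimalPeriod γ k = 1 := by
  refine (hp.eq_one_or_self_of_dvd _ hk.minimalPeriod_dvd).resolve_right fun hkp => ?_
  exact (cyclesOfLen_pos_of_minimalPeriod_eq hp.pos hkp).ne' hγ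

end Cycles

section Autotopism

variable {n : ℕ} {L : Fin n → Fin n → Fin n} {α β γ : Equiv.Perm (Fin n)}

theorem IsLatinSquare.flip (hL : IsLatinSquare L) : IsLatinSquare (_root_.flip L) :=
  ⟨hL.2, hL.1⟩

theorem IsAutotopism.flip (hA : IsAutotopism L α β γ) : IsAutotopism (_root_.flip L) β α γ :=
  fun i j => hA j i

theorem IsAutotopism.iterate (hA : IsAutotopism L α β γ) (t : ℕ) (i j : Fin n) :
    L (α^[t] i) (β^[t] j) = γ^[t] (L i j) := by
  induction t with
  | zero => rfl
  | succ t ih => rw [iterate_succ_apply', iterate_succ_apply', iterate_succ_apply', hA, ih]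

theorem IsAutotopism.isPeriodicPt (hA : IsAutotopism L α β γ) {t : ℕ} {i j : Fin n}
    (hi : IsPeriodicPt α t i) (hj : IsPeriodicPt β t j) : IsPeriodicPt γ t (L i j) := by
  rw [IsPeriodicPt, IsFixedPt, ← hA.iterate, hi.eq, hj.eq]

theorem IsAutotopism.mul_cyclesOfLen_left_le_cyclesOfLen_one (hL : IsLatinSquare L)
    (hA : IsAutotopism L α β γ) {p : ℕ} (hp : p.Prime) (hβ : 0 < cyclesOfLen β p)
    (hγ : cyclesOfLen γ p = 0) : p * cyclesOfLen α p ≤ cyclesOfLen γ 1 := by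
  obtain ⟨j, hj⟩ := exists_minimalPeriod_eq_of_cyclesOfLen_pos hβ
  have hfix : ∀ i ∈ pointsOfMinimalPeriod α p, L i j ∈ pointsOfMinimalPeriod γ 1 := by
    intro i hi
    rw [mem_pointsOfMinimalPeriod] at hi ⊢
    refine minimalPeriod_eq_one_of_isPeriodicPt hp hγ (hA.isPeriodicPt ?_ ?_)
    · exact hi ▸ isPeriodicPt_minimalPeriod α i
    · exact hj ▸ isPeriodicPt_minimalPeriod β j
  calc p * cyclesOfLen α p ≤ #(pointsOfMinimalPeriod α p) := mul_cyclesOfLen_le α p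
    _ ≤ #(pointsOfMinimalPeriod γ 1) :=
      card_le_card_of_injOn (L · j) hfix fun _ _ _ _ h => (hL.2 j).1 h
    _ = cyclesOfLen γ 1 := (cyclesOfLen_one γ).symm

end Autotopism

theorem stmt10 {n : ℕ} (L : Fin n → Fin n → Fin n) (α β γ : Equiv.Perm (Fin n))
    (hL : IsLatinSquare L) (hA : IsAutotopism L α β γ) (p : ℕ) (hp : p.Prime)
    (hα : 0 < cyclesOfLen α p) (hβ : 0 < cyclesOfLen β p)
    (hγ : cyclesOfLen γ p = 0) :
    p * max (cyclesOfLen α p) (cyclesOfLen β p) ≤ cyclesOfLen γ 1 := by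
  rw [mul_max_of_nonneg _ _ p.zero_le]
  exact max_le (hA.mul_cyclesOfLen_left_le_cyclesOfLen_one hL hp hβ hγ)
    (hA.flip.mul_cyclesOfLen_left_le_cyclesOfLen_one hL.flip hp hα hγ)
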